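/- Let Q* be a fixed point of the Bellman operator F, let π* be a greedy policy with respect to Q* (i.e., Q*(s,π*(s)) = max_{a∈A} Q*(s,a) for all s), let ε > 0 satisfy γ + ε < 1, and let M = Σ_{k=0}^∞ (γ+ε)^{−2k} (A_{π*}ᵏ)ᵀ A_{π*}ᵏ. Then for every Q ∈ ℝ^{S×A} with Q ≤ Q* entrywise, the weighted Euclidean norm ‖x‖_M = √(xᵀ M x) satisfies ‖F Q − Q*‖_M ≤ (γ+ε) ‖Q − Q*‖_M. -/

import Mathlib

/-!
Write `x = Q - Q*`, `y = F Q - Q*`, `B = A_{π*}` and `c = γ + ε`. Monotonicity of `F` and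
`F Q* = Q*` give `y ≤ 0`; greediness of `π*` gives `F Q - F Q* ≥ B (Q - Q*)`, so `B x ≤ y ≤ 0`.
As `B` is entrywise nonnegative, `B^(k+1) x ≤ B^k y ≤ 0`, hence `|B^k y|² ≤ |B^(k+1) x|²`.
The entries of `B^k` are at most `γ^k < c^k`, so the series defining `M` converges and
`vᵀ M v = Σ_k c^(-2k) |B^k v|²`; therefore `yᵀ M y ≤ Σ_k c^(-2k) |B^(k+1) x|² ≤ c² xᵀ M x`.
-/

open Finset Matrix

/-- The Bellman operator `F` for a discounted MDP:
`(F Q)(s,a) = R(s,a) + γ * Σ_{s'} P(s'|s,a) * max_{a'} Q(s',a')`. -/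
noncomputable def bellman {S A : Type*} [Fintype S] [Fintype A] [Nonempty A]
    (γ : ℝ) (P : S → A → S → ℝ) (R : S → A → ℝ) (Q : S × A → ℝ) : S × A → ℝ :=
  fun p =>
    R p.1 p.2 +
      γ * ∑ s' : S, P p.1 p.2 s' * Finset.univ.sup' Finset.univ_nonempty (fun a' => Q (s', a'))

/-- The matrix of the linear map `A_π` on `ℝ^{S×A}` associated with a deterministic
policy `π : S → A`: `(A_π x)(s,a) = γ * Σ_{s'} P(s'|s,a) * x(s', π(s'))`.
Its entry at row `(s,a)`, column `(s',a')` is `γ * P(s'|s,a)` if `a' = π s'`, else `0`. -/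
noncomputable def polMat {S A : Type*} [Fintype S] [Fintype A] [DecidableEq A]
    (γ : ℝ) (P : S → A → S → ℝ) (π : S → A) : Matrix (S × A) (S × A) ℝ :=
  Matrix.of fun p q => if q.2 = π q.1 then γ * P p.1 p.2 q.1 else 0

theorem tsum_le_mul_tsum_of_le_mul_succ {a b : ℕ → ℝ} {C : ℝ} (hC : 0 ≤ C)
    (ha₀ : ∀ k, 0 ≤ a k) (ha : Summable a) (hb : Summable b) (hle : ∀ k, b k ≤ C * a (k + 1)) :
    ∑' k, b k ≤ C * ∑' k, a k := by
  have ha' : Summable fun k => a (k + 1) := (summable_nat_add_iff 1).2 ha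
  calc ∑' k, b k ≤ ∑' k, C * a (k + 1) := hb.tsum_le_tsum hle (ha'.mul_left C)
    _ = C * ∑' k, a (k + 1) := tsum_mul_left
    _ ≤ C * ∑' k, a k := by
      rw [ha.tsum_eq_zero_add]
      exact mul_le_mul_of_nonneg_left (le_add_of_nonneg_left (ha₀ 0)) hC

theorem dotProduct_self_le_of_le_of_nonpos {n : Type*} [Fintype n] {u w : n → ℝ} (huw : u ≤ w)
    (hw : w ≤ 0) : w ⬝ᵥ w ≤ u ⬝ᵥ u :=
  sum_le_sum fun i _ => by
    have := mul_self_le_mul_self (neg_nonneg.2 (hw i)) (neg_le_neg (huw i))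
    simpa only [neg_mul_neg] using this

theorem HasSum.dotProduct_mulVec {n ι : Type*} [Fintype n] {f : ι → Matrix n n ℝ}
    {M : Matrix n n ℝ} (hf : HasSum f M) (v : n → ℝ) :
    HasSum (fun k => v ⬝ᵥ f k *ᵥ v) (v ⬝ᵥ M *ᵥ v) :=
  hf.map (AddMonoidHom.mk' (fun N : Matrix n n ℝ => v ⬝ᵥ N *ᵥ v)
      fun N N' => by rw [add_mulVec, dotProduct_add])
    (continuous_const.dotProduct (continuous_id.matrix_mulVec continuous_const))

namespace Matrix

variable {m n : Type*} [Fintype n]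

theorem mulVec_mono_of_nonneg (B : Matrix m n ℝ) (hB : ∀ i j, 0 ≤ B i j) {v w : n → ℝ}
    (hvw : v ≤ w) : B *ᵥ v ≤ B *ᵥ w := fun i =>
  sum_le_sum fun j _ => mul_le_mul_of_nonneg_left (hvw j) (hB i j)

theorem dotProduct_transpose_mul_self_mulVec {R : Type*} [CommSemiring R] [Fintype m]
    (C : Matrix m n R) (v : n → R) : v ⬝ᵥ (Cᵀ * C) *ᵥ v = C *ᵥ v ⬝ᵥ C *ᵥ v := by
  rw [← mulVec_mulVec, dotProduct_mulVec, vecMul_transpose]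

variable [DecidableEq n] {B : Matrix n n ℝ}

theorem sum_pow_apply_of_sum_apply_eq {ρ : ℝ} (hrow : ∀ i, ∑ j, B i j = ρ) (k : ℕ) (i : n) :
    ∑ j, (B ^ k) i j = ρ ^ k := by
  induction k generalizing i with
  | zero => simp [one_apply]
  | succ k ih =>
    simp only [pow_succ, mul_apply]
    rw [sum_comm]
    simp only [← mul_sum, hrow, ← sum_mul, ih]

theorem pow_apply_le_of_sum_apply_eq (hB : ∀ i j, 0 ≤ B i j) {ρ : ℝ}
    (hrow : ∀ i, ∑ j, B i j = ρ) (k : ℕ) (i j : n) : (B ^ k) i j ≤ ρ ^ k :=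
  sum_pow_apply_of_sum_apply_eq hrow k i ▸
    single_le_sum (fun j _ => pow_apply_nonneg hB k i j) (mem_univ j)

theorem summable_smul_transpose_pow_mul_pow (hB : ∀ i j, 0 ≤ B i j) {ρ c : ℝ}
    (hrow : ∀ i, ∑ j, B i j = ρ) (hρ : 0 ≤ ρ) (hρc : ρ < c) :
    Summable fun k : ℕ => (c⁻¹ ^ (2 * k)) • ((B ^ k)ᵀ * B ^ k) := by
  have hc : 0 < c := hρ.trans_lt hρc
  have hq : (ρ / c) ^ 2 < 1 := pow_lt_one₀ (div_nonneg hρ hc.le) ((div_lt_one hc).2 hρc) two_ne_zero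
  refine Pi.summable.2 fun i => Pi.summable.2 fun j => ?_
  refine .of_nonneg_of_le (fun k => ?_) (fun k => ?_)
    ((summable_geometric_of_lt_one (sq_nonneg (ρ / c)) hq).mul_left (Fintype.card n : ℝ))
  · exact mul_nonneg (by positivity) (sum_nonneg fun l _ =>
      mul_nonneg (pow_apply_nonneg hB k l i) (pow_apply_nonneg hB k l j))
  · have hentry : ((B ^ k)ᵀ * B ^ k) i j ≤ Fintype.card n * (ρ ^ k * ρ ^ k) := by
      rw [mul_apply, ← smul_eq_mul (Fintype.card n : ℝ), ← card_univ, Nat.cast_smul_eq_nsmul,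
        ← sum_const]
      exact sum_le_sum fun l _ => mul_le_mul (pow_apply_le_of_sum_apply_eq hB hrow k l i)
        (pow_apply_le_of_sum_apply_eq hB hrow k l j) (pow_apply_nonneg hB k l j) (pow_nonneg hρ k)
    calc c⁻¹ ^ (2 * k) * ((B ^ k)ᵀ * B ^ k) i j
        ≤ c⁻¹ ^ (2 * k) * (Fintype.card n * (ρ ^ k * ρ ^ k)) :=
          mul_le_mul_of_nonneg_left hentry (by positivity)
      _ = Fintype.card n * ((ρ / c) ^ 2) ^ k := by
        rw [div_eq_mul_inv]; ring

theorem dotProduct_mulVec_le_of_hasSum (hB : ∀ i j, 0 ≤ B i j) {c : ℝ} (hc : 0 < c)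
    {M : Matrix n n ℝ} (hM : HasSum (fun k : ℕ => (c⁻¹ ^ (2 * k)) • ((B ^ k)ᵀ * B ^ k)) M)
    {x y : n → ℝ} (hxy : B *ᵥ x ≤ y) (hy : y ≤ 0) :
    y ⬝ᵥ M *ᵥ y ≤ c ^ 2 * (x ⬝ᵥ M *ᵥ x) := by
  have hquad : ∀ v, HasSum (fun k : ℕ => c⁻¹ ^ (2 * k) * (B ^ k *ᵥ v ⬝ᵥ B ^ k *ᵥ v))
      (v ⬝ᵥ M *ᵥ v) := fun v => by
    simpa only [smul_mulVec, dotProduct_smul, smul_eq_mul, dotProduct_transpose_mul_self_mulVec]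
      using hM.dotProduct_mulVec v
  have hmono : ∀ k {v w : n → ℝ}, v ≤ w → B ^ k *ᵥ v ≤ B ^ k *ᵥ w := fun k _ _ =>
    mulVec_mono_of_nonneg (B ^ k) (pow_apply_nonneg hB k)
  have hpow : ∀ k, B ^ k *ᵥ y ⬝ᵥ B ^ k *ᵥ y ≤ B ^ (k + 1) *ᵥ x ⬝ᵥ B ^ (k + 1) *ᵥ x := fun k => by
    refine dotProduct_self_le_of_le_of_nonpos ?_ ?_
    · rw [pow_succ, ← mulVec_mulVec]
      exact hmono k hxy
    · simpa only [mulVec_zero] using hmono k hy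
  rw [← (hquad y).tsum_eq, ← (hquad x).tsum_eq]
  refine tsum_le_mul_tsum_of_le_mul_succ (sq_nonneg c)
    (fun k => mul_nonneg (by positivity) (dotProduct_self_star_nonneg _)) (hquad x).summable
    (hquad y).summable fun k => ?_
  calc c⁻¹ ^ (2 * k) * (B ^ k *ᵥ y ⬝ᵥ B ^ k *ᵥ y)
      ≤ c⁻¹ ^ (2 * k) * (B ^ (k + 1) *ᵥ x ⬝ᵥ B ^ (k + 1) *ᵥ x) := by gcongr; exact hpow k
    _ = c ^ 2 * (c⁻¹ ^ (2 * (k + 1)) * (B ^ (k + 1) *ᵥ x ⬝ᵥ B ^ (k + 1) *ᵥ x)) := by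
      have hscale : c⁻¹ ^ (2 * k) = c ^ 2 * c⁻¹ ^ (2 * (k + 1)) := by
        rw [mul_add, mul_one, pow_add, mul_left_comm, ← mul_pow, mul_inv_cancel₀ hc.ne', one_pow,
          mul_one]
      rw [hscale, mul_assoc]

end Matrix

section MarkovDecisionProcess

variable {S A : Type*} [Fintype S] [Fintype A] {γ : ℝ} {P : S → A → S → ℝ}

theorem polMat_nonneg [DecidableEq A] (hγ : 0 ≤ γ) (hP₀ : ∀ s a s', 0 ≤ P s a s') (π : S → A)
    (p q : S × A) : 0 ≤ polMat γ P π p q := by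
  rw [polMat, of_apply]
  split_ifs
  exacts [mul_nonneg hγ (hP₀ _ _ _), le_rfl]

theorem polMat_mulVec [DecidableEq A] (π : S → A) (x : S × A → ℝ) (p : S × A) :
    (polMat γ P π *ᵥ x) p = γ * ∑ s', P p.1 p.2 s' * x (s', π s') := by
  simp [polMat, mulVec, dotProduct, Fintype.sum_prod_type, ite_mul, mul_sum, mul_assoc]

theorem sum_polMat_apply [DecidableEq A] (hP₁ : ∀ s a, ∑ s', P s a s' = 1) (π : S → A)
    (p : S × A) : ∑ q, polMat γ P π p q = γ := by
  simpa [mulVec, dotProduct, hP₁] using polMat_mulVec (γ := γ) (P := P) π 1 p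

variable [Nonempty A] (R : S → A → ℝ)

theorem bellman_sub_bellman_apply (Q Q' : S × A → ℝ) (p : S × A) :
    (bellman γ P R Q - bellman γ P R Q') p = γ * ∑ s', P p.1 p.2 s' *
      (univ.sup' univ_nonempty (fun a => Q (s', a)) -
        univ.sup' univ_nonempty (fun a => Q' (s', a))) := by
  simp only [Pi.sub_apply, bellman, mul_sub, sum_sub_distrib]
  ring

theorem bellman_mono (hγ : 0 ≤ γ) (hP₀ : ∀ s a s', 0 ≤ P s a s') {Q Q' : S × A → ℝ}
    (hQ : Q ≤ Q') : bellman γ P R Q ≤ bellman γ P R Q' := fun p => by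
  rw [← sub_nonpos, ← Pi.sub_apply, bellman_sub_bellman_apply]
  refine mul_nonpos_of_nonneg_of_nonpos hγ (sum_nonpos fun s' _ => ?_)
  refine mul_nonpos_of_nonneg_of_nonpos (hP₀ _ _ _) (sub_nonpos.2 ?_)
  exact sup'_mono_fun fun a _ => hQ (s', a)

theorem polMat_mulVec_sub_le_bellman_sub [DecidableEq A] (hγ : 0 ≤ γ)
    (hP₀ : ∀ s a s', 0 ≤ P s a s') {Q' : S × A → ℝ} {π : S → A}
    (hπ : ∀ s, Q' (s, π s) = univ.sup' univ_nonempty (fun a => Q' (s, a))) (Q : S × A → ℝ) :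
    polMat γ P π *ᵥ (Q - Q') ≤ bellman γ P R Q - bellman γ P R Q' := fun p => by
  rw [polMat_mulVec, bellman_sub_bellman_apply]
  refine mul_le_mul_of_nonneg_left (sum_le_sum fun s' _ => ?_) hγ
  refine mul_le_mul_of_nonneg_left ?_ (hP₀ _ _ _)
  rw [Pi.sub_apply, ← hπ]
  exact sub_le_sub_right (le_sup' (fun a => Q (s', a)) (mem_univ _)) _

end MarkovDecisionProcess

theorem stmt13_general {S A : Type*} [Fintype S] [Fintype A] [Nonempty A]
    [DecidableEq S] [DecidableEq A]
    (γ ε : ℝ) (hγ0 : 0 ≤ γ) (hε : 0 < ε)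
    (P : S → A → S → ℝ) (hP0 : ∀ s a s', 0 ≤ P s a s')
    (hP1 : ∀ s a, ∑ s' : S, P s a s' = 1)
    (R : S → A → ℝ)
    (Qstar : S × A → ℝ) (hfix : bellman γ P R Qstar = Qstar)
    (πstar : S → A)
    (hgreedy : ∀ s : S,
      Qstar (s, πstar s) = Finset.univ.sup' Finset.univ_nonempty (fun a => Qstar (s, a)))
    (M : Matrix (S × A) (S × A) ℝ)
    (hM : M = ∑' k : ℕ,
      ((γ + ε)⁻¹ ^ (2 * k)) • ((polMat γ P πstar ^ k)ᵀ * polMat γ P πstar ^ k)) :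
    ∀ Q : S × A → ℝ, Q ≤ Qstar →
      Real.sqrt ((bellman γ P R Q - Qstar) ⬝ᵥ M.mulVec (bellman γ P R Q - Qstar)) ≤
        (γ + ε) * Real.sqrt ((Q - Qstar) ⬝ᵥ M.mulVec (Q - Qstar)) := by
  intro Q hQ
  have hc : 0 < γ + ε := by linarith
  have hB := polMat_nonneg hγ0 hP0 πstar
  have hsum : HasSum (fun k : ℕ => ((γ + ε)⁻¹ ^ (2 * k)) •
      ((polMat γ P πstar ^ k)ᵀ * polMat γ P πstar ^ k)) M := hM ▸
    (summable_smul_transpose_pow_mul_pow hB (sum_polMat_apply hP1 πstar) hγ0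
      (lt_add_of_pos_right γ hε)).hasSum
  have hy : bellman γ P R Q - Qstar ≤ 0 := by
    simpa only [hfix, sub_nonpos] using bellman_mono R hγ0 hP0 hQ
  have hxy : polMat γ P πstar *ᵥ (Q - Qstar) ≤ bellman γ P R Q - Qstar := by
    simpa only [hfix] using polMat_mulVec_sub_le_bellman_sub R hγ0 hP0 hgreedy Q
  calc _ ≤ Real.sqrt ((γ + ε) ^ 2 * ((Q - Qstar) ⬝ᵥ M *ᵥ (Q - Qstar))) :=
        Real.sqrt_le_sqrt (dotProduct_mulVec_le_of_hasSum hB hc hsum hxy hy)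
    _ = _ := by rw [Real.sqrt_mul (sq_nonneg _), Real.sqrt_sq hc.le]

/-- weighted-Euclidean-norm contraction on the shifted orthant:
if `F Q* = Q*`, `π*` is greedy w.r.t. `Q*`, `γ + ε < 1`, and
`M = Σ_k (γ+ε)^{−2k} (A_{π*}ᵏ)ᵀ A_{π*}ᵏ`, then `Q ≤ Q*` implies
`‖F Q − Q*‖_M ≤ (γ+ε) ‖Q − Q*‖_M`, where `‖x‖_M = √(xᵀ M x)`. -/
theorem stmt13 {S A : Type*} [Fintype S] [Fintype A] [Nonempty S] [Nonempty A]
    [DecidableEq S] [DecidableEq A]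
    (γ ε : ℝ) (hγ0 : 0 ≤ γ) (hγ1 : γ < 1) (hε : 0 < ε) (hγε : γ + ε < 1)
    (P : S → A → S → ℝ) (hP0 : ∀ s a s', 0 ≤ P s a s')
    (hP1 : ∀ s a, ∑ s' : S, P s a s' = 1)
    (R : S → A → ℝ)
    (Qstar : S × A → ℝ) (hfix : bellman γ P R Qstar = Qstar)
    (πstar : S → A)
    (hgreedy : ∀ s : S,
      Qstar (s, πstar s) = Finset.univ.sup' Finset.univ_nonempty (fun a => Qstar (s, a)))
    (M : Matrix (S × A) (S × A) ℝ)
    (hM : M = ∑' k : ℕ,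
      ((γ + ε)⁻¹ ^ (2 * k)) • ((polMat γ P πstar ^ k)ᵀ * polMat γ P πstar ^ k)) :
    ∀ Q : S × A → ℝ, Q ≤ Qstar →
      Real.sqrt ((bellman γ P R Q - Qstar) ⬝ᵥ M.mulVec (bellman γ P R Q - Qstar)) ≤
        (γ + ε) * Real.sqrt ((Q - Qstar) ⬝ᵥ M.mulVec (Q - Qstar)) :=
  stmt13_general γ ε hγ0 hε P hP0 hP1 R Qstar hfix πstar hgreedy M hM
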